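/- For every positive integer n, ζ({8}^n) = (2^{4n+1} π^{8n} / (8n+4)!) · ( (2 cos(π/8))^{8n+4} + (2 sin(π/8))^{8n+4} ). -/

import Mathlib

/-!
With `a k = (k + 1)⁻⁸`, `ζ({8}^n)` is the `n`-th elementary symmetric function `e n` of the
`a k`, so `∑ e n yⁿ = ∏ (1 + y a k)`. At `y = -z⁸` each factor splits as
`1 - w⁴ = (1 - w)(1 + w)(1 - i w)(1 + i w)` with `w = z² / (k + 1)²`, and Euler's sine product
turns the generating function, times `-i π⁴ z⁴`, into `∏ sin (π ζ z)` over `ζ ∈ {1, i, ω, i ω}`,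
`ω = e^{iπ/4}`. Product-to-sum writes this as a combination of eight `cos (π β z)`, whose
frequencies satisfy `±β⁴ = -4i (2 ± √2)²`. Comparing the coefficients of `z^(8n+4)` of the two
power series gives `e n` in terms of `(2 + √2)^(4n+2) + (2 - √2)^(4n+2)`, and
`2 ± √2 = (2 cos (π/8))², (2 sin (π/8))²`.
-/

open Real Finset

/-- Multiple zeta value with real exponents `a i`, summed over
`1 ≤ k₁ < k₂ < ⋯ < k_r`. -/
noncomputable def mzv {r : ℕ} (a : Fin r → ℝ) : ℝ :=
  ∑' f : {f : Fin r → ℕ // (∀ i, 1 ≤ f i) ∧ StrictMono f},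
    ∏ i, ((f.1 i : ℝ)) ^ (-(a i))

/-- Multiple zeta star value with real exponents `a i`, summed over
`1 ≤ k₁ ≤ k₂ ≤ ⋯ ≤ k_r`. -/
noncomputable def mzsv {r : ℕ} (a : Fin r → ℝ) : ℝ :=
  ∑' f : {f : Fin r → ℕ // (∀ i, 1 ≤ f i) ∧ Monotone f},
    ∏ i, ((f.1 i : ℝ)) ^ (-(a i))

open Filter Topology Function Complex
open scoped Nat

section PowerSeriesCoeff

variable {𝕜 : Type*} [NontriviallyNormedField 𝕜] {f : 𝕜 → 𝕜}

theorem eq_of_hasSum_mul_pow {c d : ℕ → 𝕜}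
    (hc : ∀ᶠ z in 𝓝 0, HasSum (fun n => c n * z ^ n) (f z))
    (hd : ∀ᶠ z in 𝓝 0, HasSum (fun n => d n * z ^ n) (f z)) : c = d := by
  have hasFPowerSeries {c : ℕ → 𝕜} (hc : ∀ᶠ z in 𝓝 0, HasSum (fun n => c n * z ^ n) (f z)) :
      HasFPowerSeriesAt f (FormalMultilinearSeries.ofScalars 𝕜 c) 0 :=
    hasFPowerSeriesAt_iff.2 <| by simpa [mul_comm] using hc
  exact FormalMultilinearSeries.ofScalars_series_injective 𝕜 𝕜
    ((hasFPowerSeries hc).eq_formalMultilinearSeries (hasFPowerSeries hd))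

theorem hasSum_extend_mul_pow_iff {g : ℕ → ℕ} (hg : Injective g) (c : ℕ → 𝕜) (z a : 𝕜) :
    HasSum (fun j => extend g c 0 j * z ^ j) a ↔ HasSum (fun n => c n * z ^ g n) a := by
  have : (fun j => extend g c 0 j * z ^ j) = extend g (fun n => c n * z ^ g n) 0 := by
    funext j
    by_cases hj : ∃ n, g n = j
    · obtain ⟨n, rfl⟩ := hj
      simp only [hg.extend_apply]
    · simp [extend_apply' _ _ _ hj]
  rw [this, hasSum_extend_zero hg]

theorem eq_of_hasSum_mul_pow_comp {g h : ℕ → ℕ} (hg : Injective g) (hh : Injective h)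
    {c d : ℕ → 𝕜} (hc : ∀ᶠ z in 𝓝 0, HasSum (fun n => c n * z ^ g n) (f z))
    (hd : ∀ᶠ z in 𝓝 0, HasSum (fun n => d n * z ^ h n) (f z)) {n m : ℕ} (hnm : g n = h m) :
    c n = d m := by
  have := congrFun (eq_of_hasSum_mul_pow
    (hc.mono fun z => (hasSum_extend_mul_pow_iff hg c z _).2)
    (hd.mono fun z => (hasSum_extend_mul_pow_iff hh d z _).2)) (g n)
  rwa [hg.extend_apply, hnm, hh.extend_apply] at this

end PowerSeriesCoeff

noncomputable def esymmTsum {ι R : Type*} [CommSemiring R] [TopologicalSpace R]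
    (f : ι → R) (n : ℕ) : R :=
  ∑' s : Set.powersetCard ι n, ∏ i ∈ (s : Finset ι), f i

section EsymmTsum

variable {ι : Type*}

theorem summable_prod_finset_of_nonneg {g : ι → ℝ} (hg₀ : 0 ≤ g) (hg : Summable g) :
    Summable fun s : Finset ι => ∏ i ∈ s, g i := by
  classical
  refine summable_of_sum_le (c := Real.exp (∑' i, g i)) (fun s => prod_nonneg fun i _ => hg₀ i)
    fun u => ?_
  calc ∑ s ∈ u, ∏ i ∈ s, g i
      ≤ ∑ s ∈ (u.sup id).powerset, ∏ i ∈ s, g i :=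
        sum_le_sum_of_subset_of_nonneg (fun s hs => mem_powerset.2 (le_sup (f := id) hs))
          fun s _ _ => prod_nonneg fun i _ => hg₀ i
    _ = ∏ i ∈ u.sup id, (1 + g i) := (prod_one_add _).symm
    _ ≤ ∏ i ∈ u.sup id, Real.exp (g i) :=
        prod_le_prod (fun i _ => add_nonneg zero_le_one (hg₀ i)) fun i _ => by
          rw [add_comm]; exact Real.add_one_le_exp (g i)
    _ = Real.exp (∑ i ∈ u.sup id, g i) := (Real.exp_sum _ _).symm
    _ ≤ Real.exp (∑' i, g i) := Real.exp_le_exp.2 (hg.sum_le_tsum _ fun i _ => hg₀ i)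

variable {R : Type*} [NormedCommRing R] [NormOneClass R] [CompleteSpace R] {f : ι → R}

theorem summable_prod_finset (hf : Summable fun i => ‖f i‖) :
    Summable fun s : Finset ι => ∏ i ∈ s, f i :=
  (summable_prod_finset_of_nonneg (fun i => norm_nonneg (f i)) hf).of_norm_bounded
    fun s => norm_prod_le s f

theorem hasSum_esymmTsum (hf : Summable fun i => ‖f i‖) :
    HasSum (esymmTsum f) (∑' s : Finset ι, ∏ i ∈ s, f i) := by
  have hsum := summable_prod_finset hf
  refine ((Set.powersetCard.prodEquiv.hasSum_iff).2 hsum.hasSum).sigma fun n => ?_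
  exact (hsum.comp_injective Subtype.val_injective).hasSum

theorem hasProd_one_add_esymmTsum (hf : Summable fun i => ‖f i‖) :
    HasProd (fun i => 1 + f i) (∑' n, esymmTsum f n) :=
  (hasSum_esymmTsum hf).tsum_eq ▸ hasProd_one_add_of_hasSum_prod (summable_prod_finset hf).hasSum

theorem esymmTsum_const_mul (hf : Summable fun i => ‖f i‖) (c : R) (n : ℕ) :
    esymmTsum (fun i => c * f i) n = c ^ n * esymmTsum f n := by
  have hsum : Summable fun s : Set.powersetCard ι n => ∏ i ∈ (s : Finset ι), f i :=
    (summable_prod_finset hf).comp_injective Subtype.val_injective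
  rw [esymmTsum, esymmTsum, ← hsum.tsum_mul_left]
  refine tsum_congr fun s => ?_
  rw [prod_mul_distrib, prod_const, s.2]

theorem ofReal_esymmTsum (f : ι → ℝ) (n : ℕ) :
    ((esymmTsum f n : ℝ) : ℂ) = esymmTsum (fun i => (f i : ℂ)) n := by
  simp only [esymmTsum, ofReal_tsum, ofReal_prod]

end EsymmTsum

def posStrictMonoEquivOrderEmbedding (n : ℕ) :
    {f : Fin n → ℕ // (∀ i, 1 ≤ f i) ∧ StrictMono f} ≃ (Fin n ↪o ℕ) where
  toFun f := OrderEmbedding.ofStrictMono (fun i => f.1 i - 1) fun i j hij => by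
    have := f.2.1 i; have := f.2.2 hij; dsimp only; omega
  invFun g := ⟨fun i => g i + 1, fun i => Nat.le_add_left 1 _, fun i j hij => by
    have := g.strictMono hij; dsimp only; omega⟩
  left_inv f := by ext i; have := f.2.1 i; show f.1 i - 1 + 1 = f.1 i; omega
  right_inv g := by ext i; simp

theorem mzv_const_eq_esymmTsum (s : ℝ) (n : ℕ) :
    mzv (fun _ : Fin n => s) = esymmTsum (fun k : ℕ => ((k : ℝ) + 1) ^ (-s)) n := by
  rw [mzv, ← (posStrictMonoEquivOrderEmbedding n).symm.tsum_eq, esymmTsum,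
    ← Set.powersetCard.ofFinEmbEquiv.tsum_eq]
  refine tsum_congr fun g => ?_
  simp [Set.powersetCard.ofFinEmbEquiv_apply, posStrictMonoEquivOrderEmbedding]

noncomputable def ω₈ : ℂ := (1 + I) / (√2 : ℝ)

theorem ofReal_sqrt_two_sq : ((√2 : ℝ) : ℂ) ^ 2 = 2 := by
  rw [← ofReal_pow, Real.sq_sqrt zero_le_two]; norm_num

theorem ω₈_sq : ω₈ ^ 2 = I := by
  rw [ω₈, div_pow, ofReal_sqrt_two_sq]
  linear_combination (1 / 2 : ℂ) * I_sq

theorem one_sub_I_mul_ω₈ : (1 - I) * ω₈ = (√2 : ℝ) := by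
  have h : ((√2 : ℝ) : ℂ) ≠ 0 := by norm_num
  rw [ω₈]; field_simp
  linear_combination -I_sq - ofReal_sqrt_two_sq

theorem one_add_I_mul_ω₈ : (1 + I) * ω₈ = (√2 : ℝ) * I := by
  have h : ((√2 : ℝ) : ℂ) ≠ 0 := by norm_num
  rw [ω₈]; field_simp
  linear_combination I_sq - I * ofReal_sqrt_two_sq

noncomputable def sinProdEighthRoots (z : ℂ) : ℂ :=
  sin (π * z) * sin (π * (I * z)) * (sin (π * (ω₈ * z)) * sin (π * (I * ω₈ * z)))

theorem tendsto_euler_sinProdEighthRoots (z : ℂ) :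
    Tendsto (fun N => -I * π ^ 4 * z ^ 4 * ∏ j ∈ range N, (1 - z ^ 8 / ((j : ℂ) + 1) ^ 8))
      atTop (𝓝 (sinProdEighthRoots z)) := by
  refine (((tendsto_euler_sin_prod z).mul (tendsto_euler_sin_prod (I * z))).mul
    ((tendsto_euler_sin_prod (ω₈ * z)).mul (tendsto_euler_sin_prod (I * ω₈ * z)))).congr
    fun N => ?_
  have hfactor (j : ℕ) : 1 - z ^ 8 / ((j : ℂ) + 1) ^ 8 =
      (1 - z ^ 2 / ((j : ℂ) + 1) ^ 2) * (1 - (I * z) ^ 2 / ((j : ℂ) + 1) ^ 2) *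
        ((1 - (ω₈ * z) ^ 2 / ((j : ℂ) + 1) ^ 2) * (1 - (I * ω₈ * z) ^ 2 / ((j : ℂ) + 1) ^ 2)) := by
    generalize (j : ℂ) + 1 = q
    simp only [mul_pow, ω₈_sq, I_sq]
    linear_combination ((z ^ 2 / q ^ 2) ^ 2 - (z ^ 2 / q ^ 2) ^ 4) * I_sq
  have hconst :
      π * z * (π * (I * z)) * (π * (ω₈ * z) * (π * (I * ω₈ * z))) = -I * π ^ 4 * z ^ 4 := by
    linear_combination (π ^ 4 * z ^ 4 * ω₈ ^ 2) * I_sq - π ^ 4 * z ^ 4 * ω₈_sq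
  simp only [hfactor, prod_mul_distrib, ← hconst]
  ring

theorem summable_norm_inv_add_one_pow_eight :
    Summable fun k : ℕ => ‖(((k : ℂ) + 1) ^ 8)⁻¹‖ := by
  have := (summable_nat_add_iff 1).2 (Real.summable_nat_pow_inv.2 (by norm_num : 1 < 8))
  simpa [norm_inv, norm_pow, ← Nat.cast_add_one, -Nat.cast_add] using this

theorem hasSum_sinProdEighthRoots_esymmTsum (z : ℂ) :
    HasSum (fun n => -I * π ^ 4 * (-1) ^ n * esymmTsum (fun k : ℕ => (((k : ℂ) + 1) ^ 8)⁻¹) n *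
      z ^ (8 * n + 4)) (sinProdEighthRoots z) := by
  set a : ℕ → ℂ := fun k => (((k : ℂ) + 1) ^ 8)⁻¹
  have hf : Summable fun k => ‖-z ^ 8 * a k‖ := by
    simpa only [norm_mul] using summable_norm_inv_add_one_pow_eight.mul_left ‖-z ^ 8‖
  have hprod := ((hasProd_one_add_esymmTsum hf).tendsto_prod_nat).const_mul (-I * π ^ 4 * z ^ 4)
  have heq := tendsto_nhds_unique (tendsto_euler_sinProdEighthRoots z)
    (hprod.congr fun N => by congr 1; exact prod_congr rfl fun j _ => by ring)
  rw [heq]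
  refine ((hasSum_esymmTsum hf).summable.hasSum.mul_left (-I * π ^ 4 * z ^ 4)).congr_fun ?_
  intro n
  rw [esymmTsum_const_mul summable_norm_inv_add_one_pow_eight, neg_pow (z ^ 8), ← pow_mul]
  ring

theorem sin_mul_sin_mul_sin_mul_sin (a b c d : ℂ) :
    sin a * sin b * (sin c * sin d) =
      (cos (a - b + (c - d)) + cos (a - b - (c - d)) - cos (a - b + (c + d))
        - cos (a - b - (c + d)) - cos (a + b + (c - d)) - cos (a + b - (c - d))
        + cos (a + b + (c + d)) + cos (a + b - (c + d))) / 8 := by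
  simp only [Complex.cos_add, Complex.cos_sub, Complex.sin_add, Complex.sin_sub]
  ring

theorem hasSum_sum_mul_cos {ι : Type*} (s : Finset ι) (ε β : ι → ℂ) (z : ℂ) :
    HasSum (fun m => (-1) ^ m / (2 * m)! * (∑ j ∈ s, ε j * β j ^ (2 * m)) * z ^ (2 * m))
      (∑ j ∈ s, ε j * cos (β j * z)) := by
  refine (hasSum_sum fun j _ => (hasSum_cos (β j * z)).mul_left (ε j)).congr_fun fun m => ?_
  rw [mul_sum, sum_mul]
  exact sum_congr rfl fun j _ => by ring

noncomputable def eighthFreq : Fin 8 → ℂ :=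
  ![1 - I + (√2 : ℝ), 1 - I - (√2 : ℝ), 1 - I + (√2 : ℝ) * I, 1 - I - (√2 : ℝ) * I,
    1 + I + (√2 : ℝ), 1 + I - (√2 : ℝ), 1 + I + (√2 : ℝ) * I, 1 + I - (√2 : ℝ) * I]

def eighthSign : Fin 8 → ℂ := ![1, 1, -1, -1, -1, -1, 1, 1]

theorem sinProdEighthRoots_eq_sum_cos (z : ℂ) :
    sinProdEighthRoots z = ∑ j, eighthSign j / 8 * cos (π * eighthFreq j * z) := by
  have hsub : π * (ω₈ * z) - π * (I * ω₈ * z) = π * (√2 : ℝ) * z := by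
    linear_combination (π * z) * one_sub_I_mul_ω₈
  have hadd : π * (ω₈ * z) + π * (I * ω₈ * z) = π * ((√2 : ℝ) * I) * z := by
    linear_combination (π * z) * one_add_I_mul_ω₈
  rw [sinProdEighthRoots, sin_mul_sin_mul_sin_mul_sin, hsub, hadd]
  simp only [Fin.sum_univ_eight, eighthSign, eighthFreq, Matrix.cons_val]
  ring_nf

theorem eighthSign_mul_eighthFreq_pow_four (j : Fin 8) :
    eighthSign j * eighthFreq j ^ 4 = -4 * I *
      (![(2 + (√2 : ℝ)) ^ 2, (2 - (√2 : ℝ)) ^ 2, (2 - (√2 : ℝ)) ^ 2, (2 + (√2 : ℝ)) ^ 2,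
        (2 + (√2 : ℝ)) ^ 2, (2 - (√2 : ℝ)) ^ 2, (2 + (√2 : ℝ)) ^ 2, (2 - (√2 : ℝ)) ^ 2] :
        Fin 8 → ℂ) j := by
  have h2 := ofReal_sqrt_two_sq
  have h3 : ((√2 : ℝ) : ℂ) ^ 3 = 2 * (√2 : ℝ) := by rw [pow_succ, h2]
  have h4 : ((√2 : ℝ) : ℂ) ^ 4 = 4 := by rw [show 4 = 2 * 2 by rfl, pow_mul, h2]; norm_num
  fin_cases j <;>
  · simp only [eighthSign, eighthFreq, Fin.zero_eta, Fin.mk_one, Fin.reduceFinMk, Matrix.cons_val]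
    ring_nf
    simp only [I_sq, I_pow_four, I_pow_three, h2, h3, h4]
    ring

theorem sum_eighthSign_mul_eighthFreq_pow (n : ℕ) :
    ∑ j, eighthSign j * eighthFreq j ^ (8 * n + 4) =
      4 * (-4 * I) ^ (2 * n + 1) *
        ((2 + (√2 : ℝ)) ^ (4 * n + 2) + (2 - (√2 : ℝ)) ^ (4 * n + 2) : ℂ) := by
  have hterm (j : Fin 8) : eighthSign j * eighthFreq j ^ (8 * n + 4) =
      (eighthSign j * eighthFreq j ^ 4) ^ (2 * n + 1) := by
    have hsign : eighthSign j ^ 2 = 1 := by fin_cases j <;> simp [eighthSign]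
    rw [mul_pow, pow_succ (eighthSign j), pow_mul, hsign, one_pow, one_mul, ← pow_mul]
    ring
  simp only [hterm, eighthSign_mul_eighthFreq_pow_four, Fin.sum_univ_eight, Matrix.cons_val,
    mul_pow, ← pow_mul]
  ring

theorem esymmTsum_inv_add_one_pow_eight (n : ℕ) :
    esymmTsum (fun k : ℕ => (((k : ℂ) + 1) ^ 8)⁻¹) n =
      2 ^ (4 * n + 1) * π ^ (8 * n) / (8 * n + 4)! *
        ((2 + (√2 : ℝ)) ^ (4 * n + 2) + (2 - (√2 : ℝ)) ^ (4 * n + 2) : ℂ) := by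
  have hcosSeries (z : ℂ) := sinProdEighthRoots_eq_sum_cos z ▸
    hasSum_sum_mul_cos univ (fun j => eighthSign j / 8) (fun j => π * eighthFreq j) z
  have hcoeff := eq_of_hasSum_mul_pow_comp (g := fun n => 8 * n + 4) (h := fun m => 2 * m)
    (fun a b hab => by simp only at hab; omega) (fun a b hab => by simp only at hab; omega)
    (.of_forall hasSum_sinProdEighthRoots_esymmTsum) (.of_forall hcosSeries)
    (n := n) (m := 4 * n + 2) (by ring)
  have hsum : ∑ j, eighthSign j / 8 * (π * eighthFreq j) ^ (2 * (4 * n + 2)) =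
      π ^ (8 * n + 4) / 8 * ∑ j, eighthSign j * eighthFreq j ^ (8 * n + 4) := by
    rw [mul_sum]
    exact sum_congr rfl fun j _ => by ring
  have hpow : (-4 * I) ^ (2 * n + 1) = -(2 ^ (4 * n + 2)) * (-1) ^ n * I := by
    rw [pow_succ, pow_mul, show (-4 * I) ^ 2 = -16 by linear_combination 16 * I_sq, neg_pow,
      pow_add, pow_mul]
    ring
  have hsign : (-1 : ℂ) ^ (4 * n + 2) = 1 := Even.neg_one_pow ⟨2 * n + 1, by ring⟩
  rw [hsum, sum_eighthSign_mul_eighthFreq_pow, hpow, hsign,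
    show 2 * (4 * n + 2) = 8 * n + 4 by ring] at hcoeff
  have hne : -I * π ^ 4 * (-1) ^ n ≠ 0 := by simp [pi_ne_zero]
  refine mul_left_cancel₀ hne (hcoeff.trans ?_)
  ring

theorem two_mul_sqrt_div_two_pow {x : ℝ} (hx : 0 ≤ x) (n : ℕ) :
    (2 * (√x / 2)) ^ (2 * n) = x ^ n := by
  rw [mul_div_cancel₀ _ two_ne_zero, pow_mul, Real.sq_sqrt hx]

theorem zeta_eight_rep_general (n : ℕ) :
    mzv (fun _ : Fin n => (8 : ℝ)) =
      2 ^ (4 * n + 1) * π ^ (8 * n) / (Nat.factorial (8 * n + 4)) *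
        ((2 * Real.cos (π / 8)) ^ (8 * n + 4) + (2 * Real.sin (π / 8)) ^ (8 * n + 4)) := by
  have hexp : 8 * n + 4 = 2 * (4 * n + 2) := by ring
  have hcos : (2 * Real.cos (π / 8)) ^ (8 * n + 4) = (2 + √2) ^ (4 * n + 2) := by
    rw [Real.cos_pi_div_eight, hexp, two_mul_sqrt_div_two_pow (by positivity)]
  have hsin : (2 * Real.sin (π / 8)) ^ (8 * n + 4) = (2 - √2) ^ (4 * n + 2) := by
    have : √2 ≤ 2 := Real.sqrt_le_iff.2 ⟨zero_le_two, by norm_num⟩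
    rw [Real.sin_pi_div_eight, hexp, two_mul_sqrt_div_two_pow (by linarith)]
  rw [hcos, hsin, mzv_const_eq_esymmTsum, ← ofReal_inj, ofReal_esymmTsum]
  convert esymmTsum_inv_add_one_pow_eight n using 2
  · ext k
    rw [Real.rpow_neg (by positivity), Real.rpow_ofNat]
    push_cast
    rfl
  · push_cast
    ring

/-- `ζ({8}^n) = (2^{4n+1} π^{8n}/(8n+4)!) ((2cos(π/8))^{8n+4} + (2sin(π/8))^{8n+4})`. -/
theorem zeta_eight_rep (n : ℕ) (hn : 1 ≤ n) :
    mzv (fun _ : Fin n => (8 : ℝ)) =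
      2 ^ (4 * n + 1) * π ^ (8 * n) / (Nat.factorial (8 * n + 4)) *
        ((2 * Real.cos (π / 8)) ^ (8 * n + 4) + (2 * Real.sin (π / 8)) ^ (8 * n + 4)) :=
  zeta_eight_rep_general n
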